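/- arXiv:2504.17172 — 4 statements merged into one kernel-verified Lean document; each statement's English description precedes it below -/
import Mathlib

section
/- On a compact metric space X, hypo-convergence of a sequence of upper semi-continuous functions f_n to an upper semi-continuous function f is equivalent to convergence of their hypographs in the Hausdorff metric on closed subsets of X × ℝ. -/
/-!
Everything reduces to a pointwise criterion: `hausdorffDist (hypo g) (hypo h) ≤ ε` as soon as
every `x` has some `y` with `dist x y ≤ ε` and `g x ≤ h y + ε`, and symmetrically.

If the hypographs converge in the Hausdorff distance, then Painlevé–Kuratowski convergence follows
as for any closed limit, provided the Hausdorff edistances are finite (`hausdorffDist` is `0` when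
they are not); finiteness holds because upper semicontinuous functions attain their maxima on
the compact space `X`.

Conversely, `hypo f ⊆ Li` gives the criterion for `f` against `fn n` near each point, and upper
semicontinuity of `f` together with compactness makes it uniform. If the criterion for `fn n`
against `f` failed infinitely often, the bad points would cluster at some `x₀`, putting
`(x₀, f x₀ + ε)` in `Ls ⊆ hypo f`.
-/

open Filter Set Topology Metric

noncomputable section

/-- Hypograph of a real-valued function. -/
def hypo {X : Type*} (f : X → ℝ) : Set (X × ℝ) := {z | z.2 ≤ f z.1}

/-- Painlevé–Kuratowski lower limit of a sequence of sets. -/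
def Li {Y : Type*} [TopologicalSpace Y] (A : ℕ → Set Y) : Set Y :=
  {a | ∃ u : ℕ → Y, Tendsto u atTop (nhds a) ∧ ∀ᶠ n in atTop, u n ∈ A n}

/-- Painlevé–Kuratowski upper limit of a sequence of sets. -/
def Ls {Y : Type*} [TopologicalSpace Y] (A : ℕ → Set Y) : Set Y :=
  {a | ∃ φ : ℕ → ℕ, StrictMono φ ∧ ∃ u : ℕ → Y, (∀ k, u k ∈ A (φ k)) ∧
    Tendsto u atTop (nhds a)}

/-- Hypo-convergence: Painlevé–Kuratowski convergence of hypographs. -/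
def HypoConv {X : Type*} [TopologicalSpace X] (fn : ℕ → X → ℝ) (f : X → ℝ) : Prop :=
  Li (fun n => hypo (fn n)) = hypo f ∧ Ls (fun n => hypo (fn n)) = hypo f

section PainleveKuratowski

variable {Y : Type*} [PseudoMetricSpace Y] {A : ℕ → Set Y} {B : Set Y}

lemma mem_Ls_of_eventually {φ : ℕ → ℕ} (hφ : StrictMono φ) {u : ℕ → Y} {a : Y}
    (hmem : ∀ᶠ k in atTop, u k ∈ A (φ k)) (hu : Tendsto u atTop (𝓝 a)) : a ∈ Ls A := by
  obtain ⟨N, hN⟩ := eventually_atTop.1 hmem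
  exact ⟨fun k => φ (k + N), hφ.comp (strictMono_id.add_const N), fun k => u (k + N),
    fun k => hN _ (Nat.le_add_left N k), hu.comp (tendsto_add_atTop_nat N)⟩

lemma Li_subset_Ls (A : ℕ → Set Y) : Li A ⊆ Ls A := by
  rintro z ⟨u, hu, hmem⟩
  exact mem_Ls_of_eventually strictMono_id hmem hu

lemma Ls_subset_of_tendsto_hausdorffDist (hA : ∀ n, hausdorffEDist (A n) B ≠ ⊤)
    (hB : IsClosed B) (h : Tendsto (fun n => hausdorffDist (A n) B) atTop (𝓝 0)) :
    Ls A ⊆ B := by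
  rintro z ⟨φ, hφ, u, hu, hconv⟩
  refine hB.closure_subset (Metric.mem_closure_iff.2 fun ε hε => ?_)
  have hu_near : ∀ᶠ k in atTop, dist (u k) z < ε / 2 :=
    (tendsto_iff_dist_tendsto_zero.1 hconv).eventually (gt_mem_nhds (half_pos hε))
  have hA_near : ∀ᶠ k in atTop, hausdorffDist (A (φ k)) B < ε / 2 :=
    (h.comp hφ.tendsto_atTop).eventually (gt_mem_nhds (half_pos hε))
  obtain ⟨k, huz, hAB⟩ := (hu_near.and hA_near).exists
  obtain ⟨b, hb, hub⟩ := exists_dist_lt_of_hausdorffDist_lt (hu k) hAB (hA _)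
  exact ⟨b, hb, by linarith [dist_triangle_left z b (u k)]⟩

lemma subset_Li_of_tendsto_hausdorffDist (hA : ∀ n, hausdorffEDist (A n) B ≠ ⊤)
    (h : Tendsto (fun n => hausdorffDist (A n) B) atTop (𝓝 0)) :
    B ⊆ Li A := by
  intro z hz
  have hex : ∀ n : ℕ, ∃ w ∈ A n, dist w z < hausdorffDist (A n) B + 1 / (n + 1) := fun n =>
    exists_dist_lt_of_hausdorffDist_lt' hz (lt_add_of_pos_right _ Nat.one_div_pos_of_nat) (hA n)
  choose u hu hdist using hex
  refine ⟨u, tendsto_iff_dist_tendsto_zero.2 ?_, Eventually.of_forall hu⟩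
  refine squeeze_zero (fun n => dist_nonneg) (fun n => (hdist n).le) ?_
  simpa using h.add tendsto_one_div_add_atTop_nhds_zero_nat

theorem Li_eq_and_Ls_eq_of_tendsto_hausdorffDist
    (hA : ∀ n, hausdorffEDist (A n) B ≠ ⊤) (hB : IsClosed B)
    (h : Tendsto (fun n => hausdorffDist (A n) B) atTop (𝓝 0)) :
    Li A = B ∧ Ls A = B := by
  have hLs := Ls_subset_of_tendsto_hausdorffDist hA hB h
  have hLi := subset_Li_of_tendsto_hausdorffDist hA h
  exact ⟨((Li_subset_Ls A).trans hLs).antisymm hLi, hLs.antisymm (hLi.trans (Li_subset_Ls A))⟩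

end PainleveKuratowski

section Hypograph

variable {X : Type*} [PseudoMetricSpace X]

lemma exists_mem_hypo_dist_le {g h : X → ℝ} {ε : ℝ} (hε : 0 ≤ ε)
    (hgh : ∀ x, ∃ y, dist x y ≤ ε ∧ g x ≤ h y + ε) {z : X × ℝ} (hz : z ∈ hypo g) :
    ∃ w ∈ hypo h, dist z w ≤ ε := by
  obtain ⟨y, hxy, hy⟩ := hgh z.1
  refine ⟨(y, min z.2 (h y)), min_le_right z.2 (h y), ?_⟩
  have hzg : z.2 ≤ g z.1 := hz
  have hlow : z.2 - ε ≤ min z.2 (h y) := le_min (by linarith) (by linarith)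
  have hup : min z.2 (h y) ≤ z.2 := min_le_left _ _
  rw [Prod.dist_eq, Real.dist_eq]
  exact max_le hxy (abs_le.2 ⟨by linarith, by linarith⟩)

lemma hausdorffEDist_hypo_le {g h : X → ℝ} {ε : ℝ} (hε : 0 ≤ ε)
    (hgh : ∀ x, ∃ y, dist x y ≤ ε ∧ g x ≤ h y + ε) (hhg : ∀ x, ∃ y, dist x y ≤ ε ∧ h x ≤ g y + ε) :
    hausdorffEDist (hypo g) (hypo h) ≤ ENNReal.ofReal ε := by
  have hedist {z w : X × ℝ} (hzw : dist z w ≤ ε) : edist z w ≤ ENNReal.ofReal ε :=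
    edist_dist z w ▸ ENNReal.ofReal_le_ofReal hzw
  exact hausdorffEDist_le_of_mem_edist
    (fun _ hz => (exists_mem_hypo_dist_le hε hgh hz).imp fun _ hw => ⟨hw.1, hedist hw.2⟩)
    (fun _ hz => (exists_mem_hypo_dist_le hε hhg hz).imp fun _ hw => ⟨hw.1, hedist hw.2⟩)

lemma hausdorffDist_hypo_le {g h : X → ℝ} {ε : ℝ} (hε : 0 ≤ ε)
    (hgh : ∀ x, ∃ y, dist x y ≤ ε ∧ g x ≤ h y + ε) (hhg : ∀ x, ∃ y, dist x y ≤ ε ∧ h x ≤ g y + ε) :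
    hausdorffDist (hypo g) (hypo h) ≤ ε :=
  hausdorffDist_le_of_mem_dist hε (fun _ => exists_mem_hypo_dist_le hε hgh)
    (fun _ => exists_mem_hypo_dist_le hε hhg)

variable [CompactSpace X]

lemma hausdorffEDist_hypo_ne_top {g h : X → ℝ} (hg : UpperSemicontinuous g)
    (hh : UpperSemicontinuous h) : hausdorffEDist (hypo g) (hypo h) ≠ ⊤ := by
  rcases isEmpty_or_nonempty X with hX | hX
  · simp [Set.eq_empty_of_isEmpty (hypo g), Set.eq_empty_of_isEmpty (hypo h)]
  obtain ⟨a, -, ha⟩ := (hg.upperSemicontinuousOn univ).exists_isMaxOn univ_nonempty isCompact_univ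
  obtain ⟨b, -, hb⟩ := (hh.upperSemicontinuousOn univ).exists_isMaxOn univ_nonempty isCompact_univ
  have hdiam : 0 ≤ diam (univ : Set X) := diam_nonneg
  set ε := diam (univ : Set X) + |g a - h b|
  have hdist : ∀ x y : X, dist x y ≤ ε := fun x y =>
    (dist_le_diam_of_mem isCompact_univ.isBounded (mem_univ x) (mem_univ y)).trans
      (le_add_of_nonneg_right (abs_nonneg _))
  refine ne_top_of_le_ne_top ENNReal.ofReal_ne_top (hausdorffEDist_hypo_le (by positivity)
    (fun x => ⟨b, hdist x b, ?_⟩) (fun x => ⟨a, hdist x a, ?_⟩))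
  · linarith [isMaxOn_univ_iff.1 ha x, le_abs_self (g a - h b)]
  · linarith [isMaxOn_univ_iff.1 hb x, neg_abs_le (g a - h b)]

variable {fn : ℕ → X → ℝ} {f : X → ℝ} {ε : ℝ}

lemma eventually_forall_exists_le_of_hypo_subset_Li (hf : UpperSemicontinuous f)
    (hLi : hypo f ⊆ Li (fun n => hypo (fn n))) (hε : 0 < ε) :
    ∀ᶠ n in atTop, ∀ x, ∃ y, dist x y ≤ ε ∧ f x ≤ fn n y + ε := by
  have hlocal : ∀ x₀, ∀ᶠ p : ℕ × X in atTop ×ˢ 𝓝 x₀,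
      ∃ y, dist p.2 y ≤ ε ∧ f p.2 ≤ fn p.1 y + ε := by
    intro x₀
    obtain ⟨u, hu, hmem⟩ := @hLi (x₀, f x₀) (le_refl (f x₀))
    have hu_near : ∀ᶠ n in atTop, dist (u n) (x₀, f x₀) < ε / 2 :=
      (tendsto_iff_dist_tendsto_zero.1 hu).eventually (gt_mem_nhds (half_pos hε))
    have hx_near : ∀ᶠ x in 𝓝 x₀, dist x x₀ < ε / 2 ∧ f x < f x₀ + ε / 2 :=
      Eventually.and (ball_mem_nhds x₀ (half_pos hε)) (hf x₀ _ (by linarith))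
    filter_upwards [(hu_near.and hmem).prod_mk hx_near] with ⟨n, x⟩ ⟨⟨hun, hunA⟩, hxx₀, hfx⟩
    have hfst : dist (u n).1 x₀ < ε / 2 := (le_max_left _ _).trans_lt hun
    have hsnd : dist (u n).2 (f x₀) < ε / 2 := (le_max_right _ _).trans_lt hun
    have hle : (u n).2 ≤ fn n (u n).1 := hunA
    refine ⟨(u n).1, ?_, ?_⟩
    · linarith [dist_triangle_right x (u n).1 x₀]
    · linarith [(abs_lt.1 (Real.dist_eq _ _ ▸ hsnd)).1]
  have hglobal := isCompact_univ.mem_prod_nhdsSet_of_forall fun x₀ _ => hlocal x₀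
  rw [nhdsSet_univ, ← principal_univ] at hglobal
  exact (eventually_prod_principal_iff.1 hglobal).mono fun n hn x => hn x (mem_univ x)

lemma eventually_forall_exists_le_of_Ls_subset_hypo
    (hLs : Ls (fun n => hypo (fn n)) ⊆ hypo f) (hε : 0 < ε) :
    ∀ᶠ n in atTop, ∀ x, ∃ y, dist x y ≤ ε ∧ fn n x ≤ f y + ε := by
  by_contra hcon
  obtain ⟨φ, hφ, hbad⟩ := extraction_of_frequently_atTop (not_eventually.1 hcon)
  push Not at hbad
  choose x hx using hbad
  obtain ⟨x₀, -, ψ, hψ, hlim⟩ := isCompact_univ.tendsto_subseq (x := x) fun k => mem_univ _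
  have hnear : ∀ᶠ k in atTop, dist (x (ψ k)) x₀ ≤ ε := hlim.eventually (closedBall_mem_nhds x₀ hε)
  have hmem : (x₀, f x₀ + ε) ∈ Ls (fun n => hypo (fn n)) :=
    mem_Ls_of_eventually (hφ.comp hψ) (hnear.mono fun k hk => (hx (ψ k) x₀ hk).le)
      (hlim.prodMk_nhds tendsto_const_nhds)
  linarith [show f x₀ + ε ≤ f x₀ from hLs hmem]

theorem tendsto_hausdorffDist_hypo_of_hypoConv (hf : UpperSemicontinuous f)
    (h : HypoConv fn f) : Tendsto (fun n => hausdorffDist (hypo (fn n)) (hypo f)) atTop (𝓝 0) := by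
  refine tendsto_order.2
    ⟨fun a ha => Eventually.of_forall fun n => ha.trans_le hausdorffDist_nonneg, fun ε hε => ?_⟩
  filter_upwards [eventually_forall_exists_le_of_Ls_subset_hypo h.2.le (half_pos hε),
    eventually_forall_exists_le_of_hypo_subset_Li hf h.1.ge (half_pos hε)] with n hfn_f hf_fn
  exact (hausdorffDist_hypo_le (half_pos hε).le hfn_f hf_fn).trans_lt (half_lt_self hε)

end Hypograph

/-- On a compact metric space, hypo-convergence of upper semi-continuous functions `f_n` to an
upper semi-continuous `f` is equivalent to the convergence of the hypographs in the Hausdorff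
metric on closed subsets of `X × ℝ`. -/
theorem stmt3 {X : Type*} [MetricSpace X] [CompactSpace X]
    (fn : ℕ → X → ℝ) (f : X → ℝ)
    (hfn : ∀ n, UpperSemicontinuous (fn n)) (hf : UpperSemicontinuous f) :
    HypoConv fn f ↔
      Tendsto (fun n => Metric.hausdorffDist (hypo (fn n)) (hypo f)) atTop (nhds 0) :=
  ⟨tendsto_hausdorffDist_hypo_of_hypoConv hf, Li_eq_and_Ls_eq_of_tendsto_hausdorffDist
    (fun n => hausdorffEDist_hypo_ne_top (hfn n) hf) hf.IsClosed_hypograph⟩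

end
end

section
/- Let e ∈ 𝓔 with Θ(e) < ∞. Then the set of atoms of e, i.e., points p ∈ ℝ² with e(p,p) > 0, is countable. -/
open Filter Set Topology MeasureTheory
open scoped ENNReal

noncomputable section

/-- The space-time (light-cone) partial order on `ℝ²`: `q ∈ ∨_p`. -/
def cle (p q : ℝ × ℝ) : Prop := |q.1 - p.1| ≤ q.2 - p.2

/-- `e(r⁺, q) := sup {e(r', q) : r' ∈ ∨_r \ {r}}` for `r ≠ q`, and `0` otherwise. -/
def ePlus (e : ℝ × ℝ → ℝ × ℝ → ℝ) (r q : ℝ × ℝ) : ℝ :=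
  if r = q then 0 else sSup ((fun r' => e r' q) '' {r' | cle r r' ∧ r' ≠ r})

/-- Membership in `𝓔`: non-negative upper semi-continuous functions on `ℝ⁴_≤`
(extended by `0` off `ℝ⁴_≤`) satisfying the generalized reverse triangle inequality. -/
structure IsE (e : ℝ × ℝ → ℝ × ℝ → ℝ) : Prop where
  nonneg : ∀ p q, 0 ≤ e p q
  usc : UpperSemicontinuous (fun u : (ℝ × ℝ) × (ℝ × ℝ) => e u.1 u.2)
  zero_of_not_cle : ∀ p q, ¬ cle p q → e p q = 0
  triangle : ∀ p r q, cle p r → cle r q → e p r + ePlus e r q ≤ e p q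

/-- Two point pairs `u, v ∈ ℝ⁴_≤` are disjoint if no `r` satisfies
`u.1 ≤ r ≤ u.2` and `v.1 ≤ r ≤ v.2` simultaneously. -/
def ptsDisjoint (u v : (ℝ × ℝ) × (ℝ × ℝ)) : Prop :=
  ¬ ∃ r : ℝ × ℝ, cle u.1 r ∧ cle r u.2 ∧ cle v.1 r ∧ cle r v.2

/-- `Θ(e, u) := J((y-x)/(t-s), e(u)/(t-s)) · (t-s)` for `u = (x,s;y,t)`. -/
def ThetaPt (J : ℝ → ℝ → ℝ≥0∞) (e : ℝ × ℝ → ℝ × ℝ → ℝ) (u : (ℝ × ℝ) × (ℝ × ℝ)) : ℝ≥0∞ :=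
  J ((u.2.1 - u.1.1) / (u.2.2 - u.1.2)) (e u.1 u.2 / (u.2.2 - u.1.2)) *
    ENNReal.ofReal (u.2.2 - u.1.2)

/-- The preliminary rate function `Θ(e)`: the supremum over countable collections of
pairwise disjoint non-degenerate points of the sums of `Θ(e, u_i)`. -/
def Theta (J : ℝ → ℝ → ℝ≥0∞) (e : ℝ × ℝ → ℝ × ℝ → ℝ) : ℝ≥0∞ :=
  ⨆ (U : Set ((ℝ × ℝ) × (ℝ × ℝ))) (_ : U.Countable)
    (_ : ∀ u ∈ U, cle u.1 u.2 ∧ u.1.2 ≠ u.2.2)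
    (_ : U.Pairwise ptsDisjoint), ∑' u : U, ThetaPt J e u.val

/-- Property A2 for the point-to-point rate function `J` (with `Fγ γ = F(γ,1)` the shape
function): joint convexity, continuity, vanishing below the shape function, and strict
monotonicity above it. -/
structure PropA2 (J : ℝ → ℝ → ℝ≥0∞) (Fγ : ℝ → ℝ) : Prop where
  cont : Continuous fun v : ℝ × ℝ => J v.1 v.2
  convex : ∀ a b γ₁ γ₂ x₁ x₂ : ℝ, 0 ≤ a → 0 ≤ b → a + b = 1 →
    J (a * γ₁ + b * γ₂) (a * x₁ + b * x₂) ≤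
      ENNReal.ofReal a * J γ₁ x₁ + ENNReal.ofReal b * J γ₂ x₂
  zero_of_le : ∀ γ x : ℝ, x ≤ Fγ γ → J γ x = 0
  strictMono : ∀ γ : ℝ, StrictMonoOn (J γ) (Ici (Fγ γ))

lemma ePlus_nonneg (e : ℝ × ℝ → ℝ × ℝ → ℝ) (h : ∀ p q, 0 ≤ e p q) (r q : ℝ × ℝ) :
    0 ≤ ePlus e r q := by
  unfold ePlus
  split
  · exact le_rfl
  · exact Real.sSup_nonneg (by rintro y ⟨r', -, rfl⟩; exact h r' q)

lemma e_le_vertical (e : ℝ × ℝ → ℝ × ℝ → ℝ) (he : IsE e) (p : ℝ × ℝ) (ε : ℝ) (hε : 0 ≤ ε) :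
    e p p ≤ e p (p.1, p.2 + ε) := by
  have hpp : cle p p := by simp [cle]
  have hpq : cle p (p.1, p.2 + ε) := by simp [cle]; linarith
  have := he.triangle p p (p.1, p.2 + ε) hpp hpq
  have h2 := ePlus_nonneg e he.nonneg p (p.1, p.2 + ε)
  linarith

lemma J_linear_lower (J : ℝ → ℝ → ℝ≥0∞) (Fγ : ℝ → ℝ) (hJ : PropA2 J Fγ) (x : ℝ)
    (hx : Fγ 0 + 2 ≤ x) :
    ENNReal.ofReal (x - Fγ 0) * J 0 (Fγ 0 + 1) ≤ J 0 x := by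
  set F := Fγ 0 with hF
  have hxF : 0 < x - F := by linarith
  set b : ℝ := 1 / (x - F) with hbdef
  have hb : 0 < b := by positivity
  have hb1 : b ≤ 1 := by rw [hbdef, div_le_one hxF]; linarith
  set a : ℝ := 1 - b with hadef
  have ha : 0 ≤ a := by linarith
  have hab : a + b = 1 := by ring
  have hb2 : b * (x - F) = 1 := by
    rw [hbdef, one_div, inv_mul_cancel₀ hxF.ne']
  have hcomb : a * F + b * x = F + 1 := by
    have : a * F + b * x = F + b * (x - F) := by rw [hadef]; ring
    rw [this, hb2]
  have h0 : J 0 F = 0 := hJ.zero_of_le 0 F le_rfl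
  have hconv' : J 0 (F + 1) ≤ ENNReal.ofReal b * J 0 x := by
    calc J 0 (F + 1) = J (a * 0 + b * 0) (a * F + b * x) := by rw [hcomb]; norm_num
      _ ≤ ENNReal.ofReal a * J 0 F + ENNReal.ofReal b * J 0 x := hJ.convex a b 0 0 F x ha hb.le hab
      _ = ENNReal.ofReal b * J 0 x := by rw [h0, mul_zero, zero_add]
  calc ENNReal.ofReal (x - F) * J 0 (F + 1)
      ≤ ENNReal.ofReal (x - F) * (ENNReal.ofReal b * J 0 x) := mul_le_mul_right hconv' _
    _ = ENNReal.ofReal ((x - F) * b) * J 0 x := by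
        rw [ENNReal.ofReal_mul hxF.le, mul_assoc]
    _ = J 0 x := by rw [mul_comm (x - F) b, hb2, ENNReal.ofReal_one, one_mul]

lemma thetaPt_lower (J : ℝ → ℝ → ℝ≥0∞) (Fγ : ℝ → ℝ) (hJ : PropA2 J Fγ)
    (e : ℝ × ℝ → ℝ × ℝ → ℝ) (he : IsE e) (p : ℝ × ℝ) (c ε : ℝ)
    (hc : 0 < c) (hce : c ≤ e p p) (hε : 0 < ε)
    (hεle : ε ≤ c / (2 * (|Fγ 0| + 1))) :
    J 0 (Fγ 0 + 1) * ENNReal.ofReal (c / 2) ≤ ThetaPt J e (p, (p.1, p.2 + ε)) := by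
  set F := Fγ 0 with hF
  set E := e p (p.1, p.2 + ε) with hEdef
  have hE : c ≤ E := le_trans hce (e_le_vertical e he p ε hε.le)
  have habs : F ≤ |F| := le_abs_self F
  have habs0 : 0 ≤ |F| := abs_nonneg F
  have h2 : 2 * (|F| + 1) * ε ≤ c := by
    have := (le_div_iff₀ (by positivity : (0:ℝ) < 2 * (|F| + 1))).1 hεle
    linarith
  have hx : F + 2 ≤ E / ε := by
    rw [le_div_iff₀ hε]
    nlinarith [mul_le_mul_of_nonneg_right habs hε.le]
  have hTP : ThetaPt J e (p, (p.1, p.2 + ε)) = J 0 (E / ε) * ENNReal.ofReal ε := by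
    unfold ThetaPt
    simp only [hEdef]
    norm_num
  rw [hTP]
  have hJlow := J_linear_lower J Fγ hJ (E / ε) hx
  have hEc2 : c / 2 ≤ E - F * ε := by
    nlinarith [mul_le_mul_of_nonneg_right habs hε.le]
  have hmul : (E / ε - F) * ε = E - F * ε := by
    field_simp
  calc J 0 (F + 1) * ENNReal.ofReal (c / 2)
      ≤ J 0 (F + 1) * ENNReal.ofReal (E - F * ε) :=
        mul_le_mul_right (ENNReal.ofReal_le_ofReal hEc2) _
    _ = ENNReal.ofReal ((E / ε - F) * ε) * J 0 (F + 1) := by rw [hmul, mul_comm]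
    _ = ENNReal.ofReal (E / ε - F) * J 0 (F + 1) * ENNReal.ofReal ε := by
        rw [ENNReal.ofReal_mul (by linarith : 0 ≤ E / ε - F)]
        ring
    _ ≤ J 0 (E / ε) * ENNReal.ofReal ε := mul_le_mul_left hJlow _

/-- If `e ∈ 𝓔` and `Θ(e) < ∞`, then the set of atoms of `e` (points `p` with `e(p,p) > 0`)
is countable. -/
theorem stmt6 (J : ℝ → ℝ → ℝ≥0∞) (Fγ : ℝ → ℝ) (hJ : PropA2 J Fγ)
    (e : ℝ × ℝ → ℝ × ℝ → ℝ) (he : IsE e) (hfin : Theta J e ≠ ⊤) :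
    {p : ℝ × ℝ | 0 < e p p}.Countable := by
  by_contra hunc
  -- Step A: find an uncountable set of atoms with uniform lower bound in a compact ball
  set S : ℕ → ℕ → Set (ℝ × ℝ) :=
    fun n R => {p | 1 / ((n : ℝ) + 1) ≤ e p p} ∩ Metric.closedBall 0 R with hSdef
  have hsub : {p : ℝ × ℝ | 0 < e p p} ⊆ ⋃ n, ⋃ R, S n R := by
    intro p hp
    obtain ⟨n, hn⟩ := exists_nat_one_div_lt (K := ℝ) hp
    refine mem_iUnion.2 ⟨n, mem_iUnion.2 ⟨⌈‖p‖⌉₊, hn.le, ?_⟩⟩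
    simp only [Metric.mem_closedBall, dist_zero_right]
    exact Nat.le_ceil ‖p‖
  obtain ⟨n, R, hB⟩ : ∃ n R, ¬ (S n R).Countable := by
    by_contra h
    simp only [not_exists, not_not] at h
    exact hunc ((Set.countable_iUnion fun n => Set.countable_iUnion (h n)).mono hsub)
  set c : ℝ := 1 / ((n : ℝ) + 1) with hcdef
  have hc : 0 < c := by positivity
  -- Step B: accumulation point
  have hBinf : (S n R).Infinite := fun hfin' => hB hfin'.countable
  obtain ⟨x, -, hacc⟩ := hBinf.exists_accPt_of_subset_isCompact
    (isCompact_closedBall (0 : ℝ × ℝ) R) Set.inter_subset_right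
  have H : ∀ δ : ℝ, 0 < δ → ∃ y, y ∈ S n R ∧ y ≠ x ∧ dist y x < δ := by
    intro δ hδ
    obtain ⟨y, ⟨hyU, hyB⟩, hyne⟩ :=
      (accPt_iff_nhds (x := x) (C := S n R)).1 hacc (Metric.ball x δ) (Metric.ball_mem_nhds x hδ)
    exact ⟨y, hyB, hyne, by simpa [Metric.mem_ball] using hyU⟩
  -- Step C: a geometrically converging sequence of atoms
  set next : ℝ × ℝ → ℝ × ℝ := fun q =>
    if h : 0 < dist q x then (H (dist q x / 4) (by linarith)).choose else q with hnext
  set x₀ : ℝ × ℝ := (H 1 one_pos).choose with hx₀def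
  have hx₀ := (H 1 one_pos).choose_spec
  set p : ℕ → ℝ × ℝ := fun k => next^[k] x₀ with hpdef
  have key : ∀ q : ℝ × ℝ, q ≠ x →
      next q ∈ S n R ∧ next q ≠ x ∧ dist (next q) x < dist q x / 4 := by
    intro q hq
    have hd : 0 < dist q x := dist_pos.2 hq
    have hspec := (H (dist q x / 4) (by linarith)).choose_spec
    simp only [hnext, dif_pos hd]
    exact hspec
  have hiter : ∀ k, p (k + 1) = next (p k) := by
    intro k
    simp only [hpdef]
    exact Function.iterate_succ_apply' next k x₀
  have inv : ∀ k, p k ∈ S n R ∧ p k ≠ x := by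
    intro k
    induction k with
    | zero => exact ⟨hx₀.1, hx₀.2.1⟩
    | succ k ih =>
      rw [hiter k]
      exact ⟨(key (p k) ih.2).1, (key (p k) ih.2).2.1⟩
  have hstep : ∀ k, dist (p (k + 1)) x < dist (p k) x / 4 := by
    intro k
    rw [hiter k]
    exact (key (p k) (inv k).2).2.2
  have hdpos : ∀ k, 0 < dist (p k) x := fun k => dist_pos.2 (inv k).2
  have hlt : ∀ i j, i < j → dist (p j) x < dist (p i) x / 4 := by
    intro i j hij
    induction j with
    | zero => omega
    | succ j ih =>
      rcases Nat.lt_succ_iff_lt_or_eq.1 hij with h | h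
      · have h1 := hstep j
        have h2 := ih h
        have h3 := hdpos j
        linarith
      · subst h; exact hstep i
  have hpinj : Function.Injective p := by
    intro i j hij
    by_contra hne
    rcases lt_or_gt_of_ne hne with h | h
    · have := hlt i j h; rw [hij] at this; have := hdpos j; linarith
    · have := hlt j i h; rw [hij] at this; have := hdpos j; linarith
  -- Step D: the disjoint collection
  set F := Fγ 0 with hF
  set ε₀ : ℝ := c / (2 * (|F| + 1)) with hε₀def
  have hε₀ : 0 < ε₀ := by positivity
  set ε : ℕ → ℝ := fun i => min ε₀ (dist (p i) x / 4) with hεdef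
  have hεpos : ∀ i, 0 < ε i := fun i => lt_min hε₀ (by have := hdpos i; linarith)
  have hεle₀ : ∀ i, ε i ≤ ε₀ := fun i => min_le_left _ _
  have hεled : ∀ i, ε i ≤ dist (p i) x / 4 := fun i => min_le_right _ _
  set u : ℕ → (ℝ × ℝ) × (ℝ × ℝ) := fun i => (p i, ((p i).1, (p i).2 + ε i)) with hudef
  have huinj : Function.Injective u := fun i j h => hpinj (congrArg Prod.fst h)
  -- the diamond of u i is contained in the ε i ball around p i
  have hdiam : ∀ i (r : ℝ × ℝ), cle (u i).1 r → cle r (u i).2 → dist r (p i) ≤ ε i := by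
    intro i r h1 h2
    simp only [hudef, cle] at h1 h2
    have hr2 : 0 ≤ r.2 - (p i).2 := le_trans (abs_nonneg _) h1
    have hr2' : r.2 - (p i).2 ≤ ε i := by
      have := le_trans (abs_nonneg _) h2
      linarith
    have hr1 : |r.1 - (p i).1| ≤ ε i := le_trans h1 hr2'
    rw [Prod.dist_eq]
    refine max_le ?_ ?_
    · rw [Real.dist_eq]; exact hr1
    · rw [Real.dist_eq]; rw [abs_le]; constructor <;> linarith
  have hdisj : ∀ i j, i < j → ptsDisjoint (u i) (u j) := by
    intro i j hij
    rintro ⟨r, h1, h2, h3, h4⟩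
    have hri := hdiam i r h1 h2
    have hrj := hdiam j r h3 h4
    have hdij : dist (p i) x ≤ ε i + ε j + dist (p j) x := by
      calc dist (p i) x ≤ dist (p i) (p j) + dist (p j) x := dist_triangle _ _ _
        _ ≤ (dist (p i) r + dist r (p j)) + dist (p j) x := by
            have := dist_triangle (p i) r (p j)
            linarith
        _ ≤ ε i + ε j + dist (p j) x := by
            rw [dist_comm (p i) r]
            have := hrj
            rw [dist_comm r (p j)] at this
            linarith [hri]
    have h5 := hlt i j hij
    have h6 := hεled i
    have h7 := hεled j
    have h8 := hdpos i
    linarith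
  -- conditions for Theta
  have hcond : ∀ a ∈ Set.range u, cle a.1 a.2 ∧ a.1.2 ≠ a.2.2 := by
    rintro a ⟨i, rfl⟩
    constructor
    · simp only [hudef, cle]
      simp only [sub_self, abs_zero]
      linarith [hεpos i]
    · have := hεpos i
      show (u i).1.2 ≠ (u i).2.2
      simp only [hudef]
      intro hcontra
      linarith
  have hpw : (Set.range u).Pairwise ptsDisjoint := by
    rintro a ⟨i, rfl⟩ b ⟨j, rfl⟩ hab
    rcases lt_trichotomy i j with h | h | h
    · exact hdisj i j h
    · exact absurd (congrArg u h) hab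
    · intro ⟨r, h1, h2, h3, h4⟩
      exact hdisj j i h ⟨r, h3, h4, h1, h2⟩
  -- each term is bounded below by δ
  set δ : ℝ≥0∞ := J 0 (F + 1) * ENNReal.ofReal (c / 2) with hδdef
  have hc₀ : J 0 (F + 1) ≠ 0 := by
    have h0 : J 0 F = 0 := hJ.zero_of_le 0 F le_rfl
    have := hJ.strictMono 0 (self_mem_Ici) (by simp : F + 1 ∈ Ici F) (lt_add_one F)
    rw [h0] at this
    exact this.ne'
  have hδ : δ ≠ 0 := by
    simp only [hδdef]
    refine mul_ne_zero hc₀ ?_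
    simp only [ne_eq, ENNReal.ofReal_eq_zero, not_le]
    linarith
  have hbound : ∀ a : Set.range u, δ ≤ ThetaPt J e a.val := by
    rintro ⟨a, i, rfl⟩
    have hmem : c ≤ e (p i) (p i) := (inv i).1.1
    exact thetaPt_lower J Fγ hJ e he (p i) c (ε i) hc hmem (hεpos i) (hεle₀ i)
  -- the sum is infinite
  have hUinf : (Set.range u).Infinite := Set.infinite_range_of_injective huinj
  haveI := hUinf.to_subtype
  have hsum : (⊤ : ℝ≥0∞) ≤ ∑' a : Set.range u, ThetaPt J e a.val := by
    calc (⊤ : ℝ≥0∞) = ∑' _ : Set.range u, δ :=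
          (ENNReal.tsum_const_eq_top_of_ne_zero hδ).symm
      _ ≤ ∑' a : Set.range u, ThetaPt J e a.val := ENNReal.tsum_le_tsum hbound
  have hle : ∑' a : Set.range u, ThetaPt J e a.val ≤ Theta J e := by
    refine le_iSup_of_le (Set.range u) ?_
    refine le_iSup_of_le (Set.countable_range u) ?_
    refine le_iSup_of_le hcond ?_
    exact le_iSup_of_le hpw le_rfl
  exact hfin (top_le_iff.1 (le_trans hsum hle))

end
end

section
/- Let e ∈ 𝓔 and u = (p;q) ∈ ℝ⁴_≤ with p ≠ q. Set p_n¹ := p + (1,1)/n and p_n² := p + (-1,1)/n. Then e(p⁺;q) = max{sup_n e(p_n^*;q) : * ∈ {1,2}}. -/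
open Filter Set Topology MeasureTheory
open scoped ENNReal

noncomputable section

/-!
The supremum defining `e(p⁺;q)` runs over `∨_p \ {p}`, and every point `r` of it lies in the
cone of some `p + (±1,1)/n`: the spatial sign of `r - p` selects the ray, and `n` only has to make
`2/n` smaller than the time gap `r.2 - p.2`. Since the reverse triangle inequality with
`e ≥ 0` makes `e(·;q)` antitone along the cone order, `e(r;q)` is then dominated by a term of one
of the two sequences; upper semicontinuity on the compact diamond between `p` and `q` keeps all
these suprema finite.
-/

theorem cle_refl (p : ℝ × ℝ) : cle p p := by
  simp [cle]

theorem cle_trans {a b c : ℝ × ℝ} (hab : cle a b) (hbc : cle b c) : cle a c := by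
  unfold cle at *
  rw [abs_le] at *
  constructor <;> linarith

theorem cle_antisymm {a b : ℝ × ℝ} (hab : cle a b) (hba : cle b a) : a = b := by
  unfold cle at *
  rw [abs_le] at *
  exact Prod.ext (by linarith) (by linarith)

theorem lt_snd_of_cle_of_ne {a b : ℝ × ℝ} (hab : cle a b) (hne : a ≠ b) : a.2 < b.2 := by
  unfold cle at hab
  refine lt_of_le_of_ne (by linarith [abs_nonneg (b.1 - a.1)]) fun h => hne ?_
  rw [← h, sub_self, abs_nonpos_iff, sub_eq_zero] at hab
  exact Prod.ext hab.symm h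

theorem isCompact_setOf_cle_and_cle (a b : ℝ × ℝ) : IsCompact {r | cle a r ∧ cle r b} := by
  have hclosed : IsClosed {r : ℝ × ℝ | cle a r ∧ cle r b} :=
    (isClosed_le (continuous_fst.sub continuous_const).abs
        (continuous_snd.sub continuous_const)).inter
      (isClosed_le (continuous_const.sub continuous_fst).abs
        (continuous_const.sub continuous_snd))
  refine (isCompact_Icc (a := (a.1 - (b.2 - a.2), a.2))
    (b := (a.1 + (b.2 - a.2), b.2))).of_isClosed_subset hclosed ?_
  rintro r ⟨har, hrb⟩
  unfold cle at har hrb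
  rw [abs_le] at har hrb
  simp only [Set.mem_Icc, Prod.le_def]
  refine ⟨⟨?_, ?_⟩, ?_, ?_⟩ <;> linarith

theorem boundary_rays_mem_punctured_cone (p : ℝ × ℝ) {ε : ℝ} (hε : 0 < ε) :
    (p.1 + ε, p.2 + ε) ∈ {r | cle p r ∧ r ≠ p} ∧
      (p.1 - ε, p.2 + ε) ∈ {r | cle p r ∧ r ≠ p} := by
  have hne : ∀ x : ℝ, (x, p.2 + ε) ≠ p := fun x h => by linarith [congrArg Prod.snd h]
  simp [cle, abs_of_pos hε, hne]

theorem ePlus_of_ne (e : ℝ × ℝ → ℝ × ℝ → ℝ) {p q : ℝ × ℝ} (hne : p ≠ q) :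
    ePlus e p q = sSup ((fun r => e r q) '' {r | cle p r ∧ r ≠ p}) :=
  if_neg hne

theorem exists_cle_of_cle_of_ne {p r : ℝ × ℝ} (hpr : cle p r) (hne : p ≠ r) :
    ∃ n : ℕ+, cle (p.1 + 1 / (n : ℝ), p.2 + 1 / (n : ℝ)) r ∨
      cle (p.1 - 1 / (n : ℝ), p.2 + 1 / (n : ℝ)) r := by
  obtain ⟨m, hm⟩ := exists_nat_one_div_lt (half_pos (sub_pos.mpr (lt_snd_of_cle_of_ne hpr hne)))
  refine ⟨m.succPNat, ?_⟩
  have hpos : (0 : ℝ) < 1 / (m + 1 : ℝ) := by positivity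
  simp only [Nat.succPNat_coe, Nat.cast_succ]
  unfold cle at hpr ⊢
  rw [abs_le] at hpr
  rcases le_total 0 (r.1 - p.1) with hx | hx
  · left
    rw [abs_le]
    constructor <;> linarith
  · right
    rw [abs_le]
    constructor <;> linarith

namespace IsE

variable {e : ℝ × ℝ → ℝ × ℝ → ℝ}

theorem upperSemicontinuous_left (he : IsE e) (q : ℝ × ℝ) :
    UpperSemicontinuous fun r => e r q :=
  he.usc.comp (g := fun r => (r, q)) (by fun_prop)

/-- Only the compact diamond `∨_p ∩ {r | cle r q}` carries positive values. -/
theorem bddAbove_image_cone (he : IsE e) (p q : ℝ × ℝ) :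
    BddAbove ((fun r => e r q) '' {r | cle p r}) := by
  obtain ⟨M, hM⟩ := UpperSemicontinuousOn.bddAbove_of_isCompact
    (isCompact_setOf_cle_and_cle p q) ((he.upperSemicontinuous_left q).upperSemicontinuousOn _)
  refine ⟨max M 0, ?_⟩
  rintro _ ⟨r, hpr, rfl⟩
  by_cases hrq : cle r q
  · exact le_max_of_le_left (hM ⟨r, ⟨hpr, hrq⟩, rfl⟩)
  · simp [he.zero_of_not_cle r q hrq]

theorem le_ePlus (he : IsE e) {p q r : ℝ × ℝ} (hne : p ≠ q) (hpr : cle p r) (hrp : r ≠ p) :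
    e r q ≤ ePlus e p q := by
  rw [ePlus_of_ne e hne]
  exact le_csSup ((he.bddAbove_image_cone p q).mono (image_mono fun _ hr => hr.1))
    ⟨r, ⟨hpr, hrp⟩, rfl⟩

/-- The triangle inequality through `a`, with `e(a;a) ≥ 0` and `e(b;q) ≤ e(a⁺;q)`. -/
theorem antitone_left (he : IsE e) {a b q : ℝ × ℝ} (hab : cle a b) : e b q ≤ e a q := by
  by_cases hbq : cle b q
  swap
  · rw [he.zero_of_not_cle b q hbq]
    exact he.nonneg a q
  obtain rfl | hba := eq_or_ne b a
  · exact le_rfl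
  have haq : a ≠ q := by
    rintro rfl
    exact hba (cle_antisymm hbq hab)
  have := he.triangle a a q (cle_refl a) (cle_trans hab hbq)
  linarith [he.le_ePlus haq hab hba, he.nonneg a a]

end IsE

theorem stmt7_general (e : ℝ × ℝ → ℝ × ℝ → ℝ) (he : IsE e)
    (p q : ℝ × ℝ) (hne : p ≠ q) :
    ePlus e p q =
      max (⨆ n : ℕ+, e (p.1 + 1 / (n : ℝ), p.2 + 1 / (n : ℝ)) q)
          (⨆ n : ℕ+, e (p.1 - 1 / (n : ℝ), p.2 + 1 / (n : ℝ)) q) := by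
  have hS : BddAbove ((fun r => e r q) '' {r | cle p r ∧ r ≠ p}) :=
    (he.bddAbove_image_cone p q).mono (image_mono fun _ hr => hr.1)
  have hray (n : ℕ+) := boundary_rays_mem_punctured_cone p (ε := 1 / (n : ℝ)) (by positivity)
  have hbdd₁ := hS.mono (range_subset_iff.2 fun n => mem_image_of_mem (fun r => e r q) (hray n).1)
  have hbdd₂ := hS.mono (range_subset_iff.2 fun n => mem_image_of_mem (fun r => e r q) (hray n).2)
  rw [ePlus_of_ne e hne]
  refine le_antisymm (csSup_le ⟨_, mem_image_of_mem _ (hray 1).1⟩ ?_)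
    (max_le (ciSup_le fun n => le_csSup hS (mem_image_of_mem _ (hray n).1))
      (ciSup_le fun n => le_csSup hS (mem_image_of_mem _ (hray n).2)))
  rintro _ ⟨r, ⟨hpr, hrp⟩, rfl⟩
  obtain ⟨n, hn | hn⟩ := exists_cle_of_cle_of_ne hpr hrp.symm
  · exact le_max_of_le_left ((he.antitone_left hn).trans (le_ciSup hbdd₁ n))
  · exact le_max_of_le_right ((he.antitone_left hn).trans (le_ciSup hbdd₂ n))

/-- For `e ∈ 𝓔` and `(p;q) ∈ ℝ⁴_≤` with `p ≠ q`, the value `e(p⁺;q)` is attained along the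
boundary rays of the cone: with `p_n¹ = p + (1,1)/n` and `p_n² = p + (-1,1)/n`,
`e(p⁺;q) = max(sup_n e(p_n¹;q), sup_n e(p_n²;q))`. -/
theorem stmt7 (e : ℝ × ℝ → ℝ × ℝ → ℝ) (he : IsE e)
    (p q : ℝ × ℝ) (hpq : cle p q) (hne : p ≠ q) :
    ePlus e p q =
      max (⨆ n : ℕ+, e (p.1 + 1 / (n : ℝ), p.2 + 1 / (n : ℝ)) q)
          (⨆ n : ℕ+, e (p.1 - 1 / (n : ℝ), p.2 + 1 / (n : ℝ)) q) :=
  stmt7_general e he p q hne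

end
end

section
/- Let e ∈ 𝓓, u = (p,q) = (x,s;y,t) ∈ ℝ⁴_≤ and r ∈ [s,t]. The function z ↦ e(p;(z,r)) + e((z,r)⁺;q) on {z : p ≤ (z,r) ≤ q} attains its supremum, has a rightmost maximizer z_u(r), and r ↦ z_u(r) is a continuous function on [s,t]. -/
open Filter Set Topology MeasureTheory
open scoped ENNReal

noncomputable section

/-- The generalized metric composition law:
`e(x,s;y,t) = sup_{(x,s) ≤ (z,r) < (y,t)} e(x,s;z,r) + e((z,r)⁺;y,t)` for `s ≤ r < t`. -/
def MCL (e : ℝ × ℝ → ℝ × ℝ → ℝ) : Prop :=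
  ∀ p q : ℝ × ℝ, ∀ r : ℝ, cle p q → p.2 ≤ r → r < q.2 →
    e p q = sSup {v : ℝ | ∃ z : ℝ, cle p (z, r) ∧ cle (z, r) q ∧ (z, r) ≠ q ∧
      v = e p (z, r) + ePlus e (z, r) q}

/-- Membership in `𝓓`, the set of finite rate metrics: `e ∈ 𝓔`, `d`-dominant (`e ≥ d` where
`d(p,q) = F(q-p)`), `Θ(e) < ∞`, and the generalized metric composition law. -/
structure InD (J : ℝ → ℝ → ℝ≥0∞) (F : ℝ × ℝ → ℝ) (e : ℝ × ℝ → ℝ × ℝ → ℝ) : Prop where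
  isE : IsE e
  dom : ∀ p q : ℝ × ℝ, cle p q → F (q - p) ≤ e p q
  thetaFin : Theta J e ≠ ⊤
  mcl : MCL e

/-- A countable collection of pairwise disjoint closed subintervals of `[s,t]` of mesh `≤ ε`. -/
def MeshOK (s t ε : ℝ) (P : Set (ℝ × ℝ)) : Prop :=
  P.Countable ∧ (∀ I ∈ P, s ≤ I.1 ∧ I.1 ≤ I.2 ∧ I.2 ≤ t ∧ I.2 - I.1 ≤ ε) ∧
    P.Pairwise fun I I' => I.2 < I'.1 ∨ I'.2 < I.1

/-- The rate `I(e,γ)` of a path `γ : [s,t] → ℝ`: the fine-mesh supremum of sums of `Θ` over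
countable collections of disjoint closed subintervals. -/
def pathRate (J : ℝ → ℝ → ℝ≥0∞) (e : ℝ × ℝ → ℝ × ℝ → ℝ) (s t : ℝ) (γ : ℝ → ℝ) : ℝ≥0∞ :=
  ⨅ (ε : ℝ) (_ : 0 < ε), ⨆ (P : Set (ℝ × ℝ)) (_ : MeshOK s t ε P),
    ∑' I : P, ThetaPt J e ((γ I.val.1, I.val.1), (γ I.val.2, I.val.2))

/-- A directed (closed) path in `ℝ⁴_≤`. -/
structure DirPath where
  s : ℝ
  t : ℝ
  f : ℝ → ℝ
  hle : s ≤ t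
  dir : ∀ a b : ℝ, s ≤ a → a ≤ b → b ≤ t → |f b - f a| ≤ b - a

/-- A network: a collection of paths that are pairwise disjoint (never equal at a common
time). -/
def NetDisjoint (Γ : Set DirPath) : Prop :=
  ∀ γ ∈ Γ, ∀ γ' ∈ Γ, γ ≠ γ' → ∀ r : ℝ,
    γ.s ≤ r → r ≤ γ.t → γ'.s ≤ r → r ≤ γ'.t → γ.f r ≠ γ'.f r

/-- The network rate function `I(e) = sup_Γ Σ_{γ ∈ Γ} I(e,γ)` over countable networks. -/
def rateI (J : ℝ → ℝ → ℝ≥0∞) (e : ℝ × ℝ → ℝ × ℝ → ℝ) : ℝ≥0∞ :=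
  ⨆ (Γ : Set DirPath) (_ : Γ.Countable) (_ : NetDisjoint Γ),
    ∑' γ : Γ, pathRate J e γ.val.s γ.val.t γ.val.f

/-!
Write `G(Q) = e(p;Q) + e(Q⁺;q)` (`splitVal`). The triangle inequality gives `G ≤ e(p;q)` on the
order interval `[p,q]` and the composition law makes `e(p;q)` the supremum of `G` on every level,
so the maximizers are the points with `e(p;q) ≤ G(Q)` (`maxSet`). Since `Q ↦ e(Q⁺;q)` need not be
upper semicontinuous, the heart of the proof is that limits of near-maximizers are maximizers:
applying the composition law below and above a near-maximizer produces chains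
`p ≤ u ≤ Q ≤ v ≤ q` with `e(p;q) ≤ e(p;u) + e(u;v) + e(v;q)`, and letting `u, v` collapse onto
`Q`, upper semicontinuity of `e` at `(Q,Q)` gives `e(p;q) ≤ e(p;Q) - e(Q;Q) + e(Q;Q) + e(Q⁺;q)`.
The composition law also moves a maximizer to any other level inside its light cone, so the
rightmost maximizer `z(r)` is `1`-Lipschitz in `r`.
-/

theorem UpperSemicontinuous.le_of_tendsto {X α : Type*} [TopologicalSpace X] {f : X → ℝ}
    (hf : UpperSemicontinuous f) {l : Filter α} [l.NeBot] {x : α → X} {x₀ : X}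
    (hx : Tendsto x l (𝓝 x₀)) {c : ℝ} {δ : α → ℝ} (hδ : Tendsto δ l (𝓝 0))
    (hc : ∀ᶠ a in l, c ≤ f (x a) + δ a) : c ≤ f x₀ := by
  refine le_of_forall_pos_lt_add fun ε hε => ?_
  have hfx := hx.eventually (hf x₀ (f x₀ + ε / 2) (by linarith))
  have hδε := hδ.eventually (eventually_lt_nhds (half_pos hε))
  obtain ⟨a, hca, hfa, hδa⟩ := (hc.and (hfx.and hδε)).exists
  linarith

section LightCone

variable {a b c : ℝ × ℝ}

theorem cle_iff : cle a b ↔ b.1 - a.1 ≤ b.2 - a.2 ∧ a.1 - b.1 ≤ b.2 - a.2 := by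
  rw [cle, abs_le]
  constructor <;> rintro ⟨h₁, h₂⟩ <;> constructor <;> linarith

theorem cle_refl_s13 (a : ℝ × ℝ) : cle a a := by
  simp [cle]

theorem cle.trans (hab : cle a b) (hbc : cle b c) : cle a c := by
  rw [cle_iff] at *
  constructor <;> linarith [hab.1, hab.2, hbc.1, hbc.2]

theorem cle.snd_le (h : cle a b) : a.2 ≤ b.2 :=
  sub_nonneg.1 ((abs_nonneg _).trans h)

theorem cle.eq_of_snd_le (h : cle a b) (h' : b.2 ≤ a.2) : a = b := by
  have h₂ : a.2 = b.2 := h.snd_le.antisymm h'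
  have h₁ : |b.1 - a.1| ≤ 0 := by rw [cle, h₂, sub_self] at h; exact h
  exact Prod.ext (sub_eq_zero.1 (abs_nonpos_iff.1 h₁)).symm h₂

theorem cle.snd_lt_of_ne (h : cle a b) (hne : a ≠ b) : a.2 < b.2 :=
  h.snd_le.lt_of_not_ge fun h' => hne (h.eq_of_snd_le h')

theorem cle.dist_fst_le (h : cle a b) : dist a.1 b.1 ≤ b.2 - a.2 := by
  rw [Real.dist_eq, abs_sub_comm]
  exact h

theorem cle.dist_eq (h : cle a b) : dist a b = b.2 - a.2 := by
  rw [Prod.dist_eq, Real.dist_eq a.2, abs_sub_comm, abs_of_nonneg (sub_nonneg.2 h.snd_le),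
    max_eq_right h.dist_fst_le]

theorem isClosed_cle {X : Type*} [TopologicalSpace X] {f g : X → ℝ × ℝ} (hf : Continuous f)
    (hg : Continuous g) : IsClosed {x | cle (f x) (g x)} :=
  isClosed_le (by fun_prop) (by fun_prop)

theorem cle_of_tendsto {α : Type*} {l : Filter α} [l.NeBot] {u v : α → ℝ × ℝ}
    (hu : Tendsto u l (𝓝 a)) (hv : Tendsto v l (𝓝 b)) (h : ∀ᶠ x in l, cle (u x) (v x)) :
    cle a b :=
  (isClosed_cle continuous_fst continuous_snd).mem_of_tendsto (hu.prodMk_nhds hv) h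

theorem isClosed_setOf_cle_cle (a b : ℝ × ℝ) : IsClosed {τ | cle a τ ∧ cle τ b} :=
  (isClosed_cle continuous_const continuous_id).inter (isClosed_cle continuous_id continuous_const)

theorem isCompact_setOf_cle_cle (a b : ℝ × ℝ) : IsCompact {τ | cle a τ ∧ cle τ b} := by
  refine (isCompact_closedBall a (b.2 - a.2)).of_isClosed_subset (isClosed_setOf_cle_cle a b)
    fun τ ⟨haτ, hτb⟩ => ?_
  rw [Metric.mem_closedBall, dist_comm, haτ.dist_eq]
  linarith [hτb.snd_le]

theorem exists_cle_cle_of_snd_mem (h : cle a b) {l : ℝ} (hal : a.2 ≤ l) (hlb : l ≤ b.2) :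
    ∃ w : ℝ, cle a (w, l) ∧ cle (w, l) b := by
  -- clamp `a.1` into the slice of the backward cone of `b` at level `l`
  refine ⟨max (b.1 - (b.2 - l)) (min a.1 (b.1 + (b.2 - l))), ?_, ?_⟩ <;>
    rw [cle_iff] at h ⊢ <;> simp only <;>
    rcases max_cases (b.1 - (b.2 - l)) (min a.1 (b.1 + (b.2 - l))) with ⟨hM, hM'⟩ | ⟨hM, hM'⟩ <;>
    rcases min_cases a.1 (b.1 + (b.2 - l)) with ⟨hm, hm'⟩ | ⟨hm, hm'⟩ <;>
    rw [hM] <;> (try rw [hm]) <;> (try rw [hm] at hM') <;> constructor <;> linarith [h.1, h.2]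

theorem nonempty_setOf_cle_ne (a : ℝ × ℝ) : {τ | cle a τ ∧ τ ≠ a}.Nonempty :=
  ⟨(a.1, a.2 + 1), by simp [cle], fun h => by simpa using congrArg Prod.snd h⟩

end LightCone

section RateMetric

variable {e : ℝ × ℝ → ℝ × ℝ → ℝ} {a b c : ℝ × ℝ}

theorem IsE.bddAbove_ePlus_image (hE : IsE e) (a c : ℝ × ℝ) :
    BddAbove ((fun τ => e τ c) '' {τ | cle a τ ∧ τ ≠ a}) := by
  obtain ⟨C, hC⟩ := ((hE.usc.comp (continuous_id.prodMk continuous_const)).upperSemicontinuousOn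
    _).bddAbove_of_isCompact (isCompact_setOf_cle_cle a c)
  refine ⟨max C 0, ?_⟩
  rintro _ ⟨τ, ⟨haτ, -⟩, rfl⟩
  dsimp only
  by_cases hτc : cle τ c
  · exact (hC ⟨τ, ⟨haτ, hτc⟩, rfl⟩).trans (le_max_left _ _)
  · rw [hE.zero_of_not_cle τ c hτc]
    exact le_max_right _ _

theorem IsE.le_ePlus_s13 (hE : IsE e) {τ : ℝ × ℝ} (haτ : cle a τ) (hτa : τ ≠ a) (hac : a ≠ c) :
    e τ c ≤ ePlus e a c := by
  rw [ePlus, if_neg hac]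
  exact le_csSup (hE.bddAbove_ePlus_image a c) ⟨τ, ⟨haτ, hτa⟩, rfl⟩

theorem IsE.ePlus_add_ePlus_le (hE : IsE e) (hab : cle a b) (hbc : cle b c) :
    ePlus e a b + ePlus e b c ≤ ePlus e a c := by
  rcases eq_or_ne a b with rfl | hab'
  · simp [ePlus]
  rcases eq_or_ne b c with rfl | hbc'
  · simp [ePlus]
  have hac : a ≠ c := fun h => hab' (hab.eq_of_snd_le (h ▸ hbc.snd_le))
  have hmono : ePlus e b c ≤ ePlus e a c := by
    rw [ePlus, if_neg hbc']
    refine csSup_le ((nonempty_setOf_cle_ne b).image _) ?_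
    rintro _ ⟨σ, ⟨hbσ, -⟩, rfl⟩
    exact hE.le_ePlus_s13 (hab.trans hbσ) (fun h => hab' (hab.eq_of_snd_le (h ▸ hbσ.snd_le))) hac
  rw [ePlus, if_neg hab', ← le_sub_iff_add_le]
  refine csSup_le ((nonempty_setOf_cle_ne a).image _) ?_
  rintro _ ⟨τ, ⟨haτ, hτa⟩, rfl⟩
  rw [le_sub_iff_add_le]
  dsimp only
  by_cases hτb : cle τ b
  · exact (hE.triangle τ b c hτb hbc).trans (hE.le_ePlus_s13 haτ hτa hac)
  · rw [hE.zero_of_not_cle τ b hτb, zero_add]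
    exact hmono

theorem MCL.eq_self_add_ePlus (hmcl : MCL e) (hab : cle a b) (h : a.2 < b.2) :
    e a b = e a a + ePlus e a b := by
  have hslice : {v | ∃ z : ℝ, cle a (z, a.2) ∧ cle (z, a.2) b ∧ (z, a.2) ≠ b ∧
      v = e a (z, a.2) + ePlus e (z, a.2) b} = {e a a + ePlus e a b} := by
    ext v
    constructor
    · rintro ⟨z, hz, -, -, rfl⟩
      rw [← hz.eq_of_snd_le le_rfl]
      rfl
    · rintro rfl
      exact ⟨a.1, cle_refl_s13 a, hab, fun h' => h.ne (congrArg Prod.snd h'), rfl⟩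
  rw [hmcl a b a.2 hab le_rfl h, hslice, csSup_singleton]

theorem MCL.ePlus_le (hmcl : MCL e) (hE : IsE e) (hab : cle a b) : ePlus e a b ≤ e a b := by
  rcases eq_or_ne a b with rfl | hne
  · simpa [ePlus] using hE.nonneg a a
  rw [hmcl.eq_self_add_ePlus hab (hab.snd_lt_of_ne hne)]
  linarith [hE.nonneg a a]

theorem MCL.exists_lt_add_ePlus (hmcl : MCL e) (hab : cle a b) {l δ : ℝ} (hal : a.2 ≤ l)
    (hlb : l < b.2) (hδ : 0 < δ) :
    ∃ w : ℝ, cle a (w, l) ∧ cle (w, l) b ∧ e a b - δ < e a (w, l) + ePlus e (w, l) b := by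
  obtain ⟨w₀, haw₀, hw₀b⟩ := exists_cle_cle_of_snd_mem hab hal hlb.le
  have hlt : e a b - δ < sSup {v | ∃ z : ℝ, cle a (z, l) ∧ cle (z, l) b ∧ (z, l) ≠ b ∧
      v = e a (z, l) + ePlus e (z, l) b} := by
    rw [← hmcl a b l hab hal hlb]
    linarith
  obtain ⟨_, ⟨w, haw, hwb, -, rfl⟩, hw⟩ := exists_lt_of_lt_csSup
    (by exact ⟨_, w₀, haw₀, hw₀b, fun h => hlb.ne (congrArg Prod.snd h), rfl⟩) hlt
  exact ⟨w, haw, hwb, hw⟩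

end RateMetric

section Maximizers

def splitVal (e : ℝ × ℝ → ℝ × ℝ → ℝ) (p q Q : ℝ × ℝ) : ℝ := e p Q + ePlus e Q q

def nearMaxSet (e : ℝ × ℝ → ℝ × ℝ → ℝ) (p q : ℝ × ℝ) (ε : ℝ) : Set (ℝ × ℝ) :=
  {Q | cle p Q ∧ cle Q q ∧ e p q - ε < splitVal e p q Q}

def maxSet (e : ℝ × ℝ → ℝ × ℝ → ℝ) (p q : ℝ × ℝ) : Set (ℝ × ℝ) :=
  {Q | cle p Q ∧ cle Q q ∧ e p q ≤ splitVal e p q Q}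

variable {e : ℝ × ℝ → ℝ × ℝ → ℝ} {p q Q : ℝ × ℝ}

theorem IsE.splitVal_le (hE : IsE e) (hpQ : cle p Q) (hQq : cle Q q) :
    splitVal e p q Q ≤ e p q :=
  hE.triangle p Q q hpQ hQq

theorem splitVal_self_right : splitVal e p q q = e p q := by
  simp [splitVal, ePlus]

theorem MCL.splitVal_self_left (hmcl : MCL e) (hpq : cle p q) (h : p.2 < q.2) :
    splitVal e p q p = e p q :=
  (hmcl.eq_self_add_ePlus hpq h).symm

theorem right_mem_maxSet (hpq : cle p q) : q ∈ maxSet e p q :=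
  ⟨hpq, cle_refl_s13 q, splitVal_self_right.ge⟩

theorem maxSet_subset_nearMaxSet {ε : ℝ} (hε : 0 < ε) : maxSet e p q ⊆ nearMaxSet e p q ε :=
  fun _ ⟨hpQ, hQq, hQ⟩ => ⟨hpQ, hQq, by linarith⟩

theorem nearMaxSet_mono {ε ε' : ℝ} (h : ε ≤ ε') : nearMaxSet e p q ε ⊆ nearMaxSet e p q ε' :=
  fun _ ⟨hpQ, hQq, hQ⟩ => ⟨hpQ, hQq, by linarith⟩

theorem closure_nearMaxSet_subset (ε : ℝ) :
    closure (nearMaxSet e p q ε) ⊆ {Q | cle p Q ∧ cle Q q} :=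
  closure_minimal (fun _ hQ => ⟨hQ.1, hQ.2.1⟩) (isClosed_setOf_cle_cle p q)

theorem exists_seq_mem_nearMaxSet (hQ : ∀ ε > 0, Q ∈ closure (nearMaxSet e p q ε)) {δ : ℝ}
    (hδ : 0 < δ) : ∃ Q' : ℕ → ℝ × ℝ,
      (∀ n : ℕ, Q' n ∈ nearMaxSet e p q (1 / (n + 1)) ∧ dist (Q' n) Q < δ) ∧
        Tendsto Q' atTop (𝓝 Q) := by
  have hex (n : ℕ) : ∃ Q', Q' ∈ nearMaxSet e p q (1 / (n + 1)) ∧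
      dist Q' Q < min δ (1 / (n + 1)) := by
    obtain ⟨Q', hQ', hd⟩ := Metric.mem_closure_iff.1 (hQ _ Nat.one_div_pos_of_nat) _
      (lt_min hδ Nat.one_div_pos_of_nat)
    exact ⟨Q', hQ', by rwa [dist_comm]⟩
  choose Q' hQ' hd using hex
  refine ⟨Q', fun n => ⟨hQ' n, (hd n).trans_le (min_le_left _ _)⟩, ?_⟩
  rw [tendsto_iff_dist_tendsto_zero]
  exact squeeze_zero (fun _ => dist_nonneg) (fun n => ((hd n).trans_le (min_le_right _ _)).le)
    tendsto_one_div_add_atTop_nhds_zero_nat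

theorem splitVal_lt_chain (hE : IsE e) (hmcl : MCL e) (hpQ : cle p Q) (hQq : cle Q q)
    {l m : ℝ} (hl : p.2 ≤ l) (hlQ : l < Q.2) (hQm : Q.2 < m) (hm : m < q.2) {ε : ℝ} (hε : 0 < ε) :
    ∃ a b : ℝ, cle p (a, l) ∧ cle (a, l) Q ∧ cle Q (b, m) ∧ cle (b, m) q ∧
      splitVal e p q Q < e p (a, l) + e (a, l) (b, m) + e (b, m) q + ε := by
  obtain ⟨a, hpa, haQ, ha⟩ := hmcl.exists_lt_add_ePlus hpQ hl hlQ (half_pos hε)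
  obtain ⟨b, hQb, hbq, hb⟩ := hmcl.exists_lt_add_ePlus hQq hQm.le hm (half_pos hε)
  refine ⟨a, b, hpa, haQ, hQb, hbq, ?_⟩
  -- the two copies of `e(Q;Q)` from the composition law at `Q` cancel
  have hQq' := hmcl.eq_self_add_ePlus hQq (hQm.trans hm)
  have hQb' := hmcl.eq_self_add_ePlus hQb hQm
  have hsplit := hE.ePlus_add_ePlus_le haQ hQb
  have hab := hmcl.ePlus_le hE (haQ.trans hQb)
  have hbq' := hmcl.ePlus_le hE hbq
  rw [splitVal]
  linarith

theorem exists_chain_le (hE : IsE e) (hmcl : MCL e)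
    (hQ : ∀ ε > 0, Q ∈ closure (nearMaxSet e p q ε)) {l m : ℝ}
    (hl : p.2 ≤ l) (hlQ : l < Q.2) (hQm : Q.2 < m) (hm : m < q.2) :
    ∃ u v : ℝ × ℝ, cle p u ∧ cle u Q ∧ u.2 = l ∧ cle Q v ∧ cle v q ∧ v.2 = m ∧
      e p q ≤ e p u + e u v + e v q := by
  obtain ⟨Q', hQ', hQ'Q⟩ :=
    exists_seq_mem_nearMaxSet hQ (lt_min (sub_pos.2 hlQ) (sub_pos.2 hQm))
  have hlevel (n : ℕ) : l < (Q' n).2 ∧ (Q' n).2 < m := by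
    have h := (le_max_right _ _).trans_lt (Prod.dist_eq.symm.trans_lt (hQ' n).2)
    rw [Real.dist_eq, abs_lt] at h
    constructor <;> linarith [min_le_left (Q.2 - l) (m - Q.2), min_le_right (Q.2 - l) (m - Q.2)]
  choose a b hpa haQ hQb hbq hab using fun n : ℕ => splitVal_lt_chain hE hmcl (hQ' n).1.1
    (hQ' n).1.2.1 hl (hlevel n).1 (hlevel n).2 hm (Nat.one_div_pos_of_nat (n := n))
  have hbound (n : ℕ) :
      (a n, b n) ∈ Metric.closedBall p.1 (l - p.2) ×ˢ Metric.closedBall q.1 (q.2 - m) :=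
    ⟨by rw [Metric.mem_closedBall, dist_comm]; exact (hpa n).dist_fst_le, (hbq n).dist_fst_le⟩
  obtain ⟨x, -, φ, hφ, hx⟩ :=
    ((isCompact_closedBall _ _).prod (isCompact_closedBall _ _)).tendsto_subseq hbound
  have hu : Tendsto (fun k => (a (φ k), l)) atTop (𝓝 (x.1, l)) :=
    ((continuous_fst.tendsto x).comp hx).prodMk_nhds tendsto_const_nhds
  have hv : Tendsto (fun k => (b (φ k), m)) atTop (𝓝 (x.2, m)) :=
    ((continuous_snd.tendsto x).comp hx).prodMk_nhds tendsto_const_nhds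
  have hQφ := hQ'Q.comp hφ.tendsto_atTop
  refine ⟨(x.1, l), (x.2, m),
    cle_of_tendsto tendsto_const_nhds hu (.of_forall fun k => hpa (φ k)),
    cle_of_tendsto hu hQφ (.of_forall fun k => haQ (φ k)), rfl,
    cle_of_tendsto hQφ hv (.of_forall fun k => hQb (φ k)),
    cle_of_tendsto hv tendsto_const_nhds (.of_forall fun k => hbq (φ k)), rfl, ?_⟩
  have hF : UpperSemicontinuous fun y : ℝ × ℝ =>
      e p (y.1, l) + e (y.1, l) (y.2, m) + e (y.2, m) q :=
    ((hE.usc.comp (by fun_prop : Continuous fun y : ℝ × ℝ => (p, (y.1, l)))).add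
      (hE.usc.comp (by fun_prop : Continuous fun y : ℝ × ℝ => ((y.1, l), (y.2, m))))).add
      (hE.usc.comp (by fun_prop : Continuous fun y : ℝ × ℝ => ((y.2, m), q)))
  refine hF.le_of_tendsto hx (δ := fun k => 2 * (1 / ((φ k : ℝ) + 1))) ?_
    (.of_forall fun k => ?_)
  · simpa using
      ((tendsto_one_div_add_atTop_nhds_zero_nat (𝕜 := ℝ)).comp hφ.tendsto_atTop).const_mul 2
  · have hnear := (hQ' (φ k)).1.2.2
    have hchain := hab (φ k)
    dsimp only [Function.comp]
    linarith

theorem mem_maxSet_of_forall_mem_closure (hE : IsE e) (hmcl : MCL e) (hpq : cle p q)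
    (hQ : ∀ ε > 0, Q ∈ closure (nearMaxSet e p q ε)) : Q ∈ maxSet e p q := by
  obtain ⟨hpQ, hQq⟩ := closure_nearMaxSet_subset 1 (hQ 1 one_pos)
  refine ⟨hpQ, hQq, ?_⟩
  rcases eq_or_ne Q q with rfl | hQq'
  · exact splitVal_self_right.ge
  rcases eq_or_ne p Q with rfl | hpQ'
  · exact (hmcl.splitVal_self_left hpq (hpq.snd_lt_of_ne hQq')).ge
  obtain ⟨l, -, hl, hlQ⟩ := exists_seq_strictMono_tendsto' (hpQ.snd_lt_of_ne hpQ')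
  obtain ⟨m, -, hm, hmQ⟩ := exists_seq_strictAnti_tendsto' (hQq.snd_lt_of_ne hQq')
  choose u v hpu huQ hul hQv hvq hvm hchain using fun n =>
    exists_chain_le hE hmcl hQ (hl n).1.le (hl n).2 (hm n).1 (hm n).2
  have hu : Tendsto u atTop (𝓝 Q) := by
    rw [tendsto_iff_dist_tendsto_zero]
    refine squeeze_zero (fun _ => dist_nonneg) (fun n => (huQ n).dist_eq.le) ?_
    simpa [hul] using (tendsto_const_nhds (x := Q.2)).sub hlQ
  have hv : Tendsto v atTop (𝓝 Q) := by
    rw [tendsto_iff_dist_tendsto_zero]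
    refine squeeze_zero (fun _ => dist_nonneg)
      (fun n => ((dist_comm _ _).trans (hQv n).dist_eq).le) ?_
    simpa [hvm] using hmQ.sub (tendsto_const_nhds (x := Q.2))
  have hbound (n : ℕ) : e p q - splitVal e p q Q + e Q Q ≤ e (u n) (v n) := by
    have huQ' : u n ≠ Q := fun h => (hl n).2.ne ((hul n).symm.trans (congrArg Prod.snd h))
    have hvQ' : v n ≠ Q := fun h => (hm n).1.ne' ((hvm n).symm.trans (congrArg Prod.snd h))
    have hleft := hE.triangle p (u n) Q (hpu n) (huQ n)
    have hQQ := hE.le_ePlus_s13 (huQ n) huQ'.symm huQ'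
    have hright := hE.le_ePlus_s13 (hQv n) hvQ' hQq'
    have := hchain n
    rw [splitVal]
    linarith
  have hQQ := hE.usc.le_of_tendsto (hu.prodMk_nhds hv) tendsto_const_nhds
    (.of_forall fun n => (hbound n).trans_eq (add_zero _).symm)
  linarith

theorem isClosed_maxSet (hE : IsE e) (hmcl : MCL e) (hpq : cle p q) :
    IsClosed (maxSet e p q) :=
  closure_subset_iff_isClosed.1 fun _ hQ => mem_maxSet_of_forall_mem_closure hE hmcl hpq
    fun _ hε => closure_mono (maxSet_subset_nearMaxSet hε) hQ

theorem exists_mem_maxSet_of_seq (hE : IsE e) (hmcl : MCL e) (hpq : cle p q) {l : ℝ}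
    {C : Set ℝ} (hC : IsClosed C) {w : ℕ → ℝ} (hwC : ∀ n, w n ∈ C)
    (hw : ∀ n : ℕ, (w n, l) ∈ nearMaxSet e p q (1 / (n + 1))) :
    ∃ z ∈ C, (z, l) ∈ maxSet e p q := by
  have hbound (n : ℕ) : w n ∈ C ∩ Metric.closedBall p.1 (l - p.2) :=
    ⟨hwC n, by rw [Metric.mem_closedBall, dist_comm]; exact (hw n).1.dist_fst_le⟩
  obtain ⟨z, hz, φ, hφ, hwz⟩ :=
    ((isCompact_closedBall _ _).inter_left hC).tendsto_subseq hbound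
  refine ⟨z, hz.1, mem_maxSet_of_forall_mem_closure hE hmcl hpq fun ε hε => ?_⟩
  refine mem_closure_of_tendsto (hwz.prodMk_nhds tendsto_const_nhds) ?_
  filter_upwards [((tendsto_one_div_add_atTop_nhds_zero_nat (𝕜 := ℝ)).comp
    hφ.tendsto_atTop).eventually (eventually_le_nhds hε)] with k hk
  exact nearMaxSet_mono hk (hw (φ k))

theorem exists_cle_mem_maxSet_of_le (hE : IsE e) (hmcl : MCL e) (hpq : cle p q)
    (hQ : Q ∈ maxSet e p q) {l : ℝ} (hpl : p.2 ≤ l) (hlQ : l ≤ Q.2) :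
    ∃ z, cle (z, l) Q ∧ (z, l) ∈ maxSet e p q := by
  rcases hlQ.eq_or_lt with rfl | hlQ
  · exact ⟨Q.1, cle_refl_s13 Q, hQ⟩
  choose w hpw hwQ hw using fun n : ℕ =>
    hmcl.exists_lt_add_ePlus hQ.1 hpl hlQ (Nat.one_div_pos_of_nat (n := n))
  refine exists_mem_maxSet_of_seq hE hmcl hpq (C := {z | cle (z, l) Q})
    (isClosed_cle (by fun_prop) continuous_const) hwQ
    fun n => ⟨hpw n, (hwQ n).trans hQ.2.1, ?_⟩
  have hsplit := hE.ePlus_add_ePlus_le (hwQ n) hQ.2.1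
  have hQmax := hQ.2.2
  have hwn := hw n
  rw [splitVal] at hQmax ⊢
  linarith

theorem exists_cle_mem_maxSet_of_ge (hE : IsE e) (hmcl : MCL e) (hpq : cle p q)
    (hQ : Q ∈ maxSet e p q) {l : ℝ} (hQl : Q.2 ≤ l) (hlq : l ≤ q.2) :
    ∃ z, cle Q (z, l) ∧ (z, l) ∈ maxSet e p q := by
  rcases hlq.eq_or_lt with rfl | hlq
  · exact ⟨q.1, hQ.2.1, right_mem_maxSet hpq⟩
  rcases hQl.eq_or_lt with rfl | hQl
  · exact ⟨Q.1, cle_refl_s13 Q, hQ⟩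
  choose w hQw hwq hw using fun n : ℕ =>
    hmcl.exists_lt_add_ePlus hQ.2.1 hQl.le hlq (Nat.one_div_pos_of_nat (n := n))
  refine exists_mem_maxSet_of_seq hE hmcl hpq (C := {z | cle Q (z, l)})
    (isClosed_cle continuous_const (by fun_prop)) hQw
    fun n => ⟨hQ.1.trans (hQw n), hwq n, ?_⟩
  have hpw := hE.triangle p Q (w n, l) hQ.1 (hQw n)
  have hQw' := hmcl.eq_self_add_ePlus (hQw n) hQl
  have hQq := hmcl.eq_self_add_ePlus hQ.2.1 (hQl.trans hlq)
  have hQmax := hQ.2.2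
  have hwn := hw n
  rw [splitVal] at hQmax ⊢
  linarith

theorem exists_mem_maxSet_dist_le (hE : IsE e) (hmcl : MCL e) (hpq : cle p q)
    (hQ : Q ∈ maxSet e p q) {l : ℝ} (hl : l ∈ Icc p.2 q.2) :
    ∃ z, (z, l) ∈ maxSet e p q ∧ dist z Q.1 ≤ dist l Q.2 := by
  rw [Real.dist_eq l]
  rcases le_total l Q.2 with hlQ | hQl
  · obtain ⟨z, hzQ, hz⟩ := exists_cle_mem_maxSet_of_le hE hmcl hpq hQ hl.1 hlQ
    exact ⟨z, hz, hzQ.dist_fst_le.trans (abs_sub_comm l Q.2 ▸ le_abs_self _)⟩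
  · obtain ⟨z, hQz, hz⟩ := exists_cle_mem_maxSet_of_ge hE hmcl hpq hQ hQl hl.2
    exact ⟨z, hz, (dist_comm z Q.1).trans_le (hQz.dist_fst_le.trans (le_abs_self _))⟩

end Maximizers

theorem lipschitzOnWith_sSup_slice {M : Set (ℝ × ℝ)} {I : Set ℝ}
    (hbdd : ∀ r, BddAbove {z | (z, r) ∈ M}) (hmem : ∀ r ∈ I, (sSup {z | (z, r) ∈ M}, r) ∈ M)
    (hmove : ∀ Q ∈ M, ∀ l ∈ I, ∃ z, (z, l) ∈ M ∧ dist z Q.1 ≤ dist l Q.2) :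
    LipschitzOnWith 1 (fun r => sSup {z | (z, r) ∈ M}) I := by
  set Z : ℝ → ℝ := fun r => sSup {z | (z, r) ∈ M}
  have hsub : ∀ r ∈ I, ∀ r' ∈ I, Z r - Z r' ≤ dist r r' := by
    intro r hr r' hr'
    obtain ⟨z, hz, hdist⟩ := hmove _ (hmem r hr) r' hr'
    calc Z r - Z r' ≤ Z r - z := sub_le_sub_left (le_csSup (hbdd r') hz) _
      _ ≤ dist z (Z r) := by rw [Real.dist_eq, abs_sub_comm]; exact le_abs_self _
      _ ≤ dist r r' := dist_comm r r' ▸ hdist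
  refine LipschitzOnWith.of_dist_le_mul fun r hr r' hr' => ?_
  rw [NNReal.coe_one, one_mul, Real.dist_eq, abs_sub_le_iff]
  exact ⟨hsub r hr r' hr', dist_comm r r' ▸ hsub r' hr' r hr⟩

theorem stmt13_general (J : ℝ → ℝ → ℝ≥0∞) (F : ℝ × ℝ → ℝ)
    (e : ℝ × ℝ → ℝ × ℝ → ℝ) (he : InD J F e) (p q : ℝ × ℝ) (hpq : cle p q) :
    ∃ zmax : ℝ → ℝ, ContinuousOn zmax (Icc p.2 q.2) ∧
      ∀ r ∈ Icc p.2 q.2,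
        cle p (zmax r, r) ∧ cle (zmax r, r) q ∧
        (∀ z : ℝ, cle p (z, r) → cle (z, r) q →
          e p (z, r) + ePlus e (z, r) q ≤ e p (zmax r, r) + ePlus e (zmax r, r) q) ∧
        (∀ z : ℝ, cle p (z, r) → cle (z, r) q →
          e p (z, r) + ePlus e (z, r) q = e p (zmax r, r) + ePlus e (zmax r, r) q →
          z ≤ zmax r) := by
  obtain ⟨hE, -, -, hmcl⟩ := he
  have hbdd (r : ℝ) : BddAbove {z | (z, r) ∈ maxSet e p q} :=
    ⟨p.1 + (r - p.2), fun z hz => by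
      have hpz : |z - p.1| ≤ r - p.2 := hz.1
      linarith [le_abs_self (z - p.1)]⟩
  have hmem (r : ℝ) (hr : r ∈ Icc p.2 q.2) :
      (sSup {z | (z, r) ∈ maxSet e p q}, r) ∈ maxSet e p q := by
    obtain ⟨z, hz, -⟩ := exists_mem_maxSet_dist_le hE hmcl hpq (right_mem_maxSet hpq) hr
    exact ((isClosed_maxSet hE hmcl hpq).preimage (continuous_id.prodMk continuous_const)).csSup_mem
      ⟨z, hz⟩ (hbdd r)
  refine ⟨_, (lipschitzOnWith_sSup_slice hbdd hmem
    fun Q hQ l hl => exists_mem_maxSet_dist_le hE hmcl hpq hQ hl).continuousOn, fun r hr => ?_⟩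
  obtain ⟨hpz, hzq, hzmax⟩ := hmem r hr
  exact ⟨hpz, hzq, fun z hpz hzq => (hE.splitVal_le hpz hzq).trans hzmax,
    fun z hpz hzq heq => le_csSup (hbdd r) ⟨hpz, hzq, hzmax.trans_eq heq.symm⟩⟩

/-- For `e ∈ 𝓓`, `u = (p,q) ∈ ℝ⁴_≤` and `r ∈ [s,t]`, the map
`z ↦ e(p;(z,r)) + e((z,r)⁺;q)` on `{z : p ≤ (z,r) ≤ q}` attains its supremum, has a
rightmost maximizer `z_u(r)`, and `r ↦ z_u(r)` is continuous on `[s,t]`. -/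
theorem stmt13 (J : ℝ → ℝ → ℝ≥0∞) (F : ℝ × ℝ → ℝ) (hJ : PropA2 J (fun γ => F (γ, 1)))
    (e : ℝ × ℝ → ℝ × ℝ → ℝ) (he : InD J F e) (p q : ℝ × ℝ) (hpq : cle p q) :
    ∃ zmax : ℝ → ℝ, ContinuousOn zmax (Icc p.2 q.2) ∧
      ∀ r ∈ Icc p.2 q.2,
        cle p (zmax r, r) ∧ cle (zmax r, r) q ∧
        (∀ z : ℝ, cle p (z, r) → cle (z, r) q →
          e p (z, r) + ePlus e (z, r) q ≤ e p (zmax r, r) + ePlus e (zmax r, r) q) ∧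
        (∀ z : ℝ, cle p (z, r) → cle (z, r) q →
          e p (z, r) + ePlus e (z, r) q = e p (zmax r, r) + ePlus e (zmax r, r) q →
          z ≤ zmax r) :=
  stmt13_general J F e he p q hpq

end
end
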